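/- arXiv:1703.00699 — 5 statements merged into one kernel-verified Lean document; each statement's English description precedes it below -/
import Mathlib

section
/- The projection proj does not decrease the out-degree at required vertices: if x' ∈ ℝ^{R×R} has nonnegative entries, then x = proj(x') satisfies ∑_{j∈Γ(i)} x_{ij} ≥ ∑_{j∈R, j≠i} x'_{ij} for every required vertex i ∈ R. -/
/-- The list of consecutive steps (arcs) of a path given as a list of vertices. -/
def walkSteps {V : Type*} (w : List V) : List (V × V) := w.zip w.tail

/-- The shortest-path averaging projection. -/
noncomputable def proj {V : Type*} [DecidableEq V] (R : Finset V)
    (P : V → V → Finset (List V)) (x' : V → V → ℝ) (u v : V) : ℝ :=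
  ∑ i ∈ R, ∑ j ∈ R,
    (((P i j).filter (fun p => (u, v) ∈ walkSteps p)).card : ℝ) * x' i j / ((P i j).card : ℝ)

/-- The projection does not decrease the out-degree at required vertices: for a
nonnegative `x'`, at every required vertex `i`, the total outflow of `proj x'`
is at least `∑_{j ∈ R, j ≠ i} x'_{ij}`. -/
theorem proj_outdegree_ge
    {V : Type*} [Fintype V] [DecidableEq V]
    (R : Finset V) (P : V → V → Finset (List V))
    (hP : ∀ i ∈ R, ∀ j ∈ R, ∀ p ∈ P i j,
      p.head? = some i ∧ p.getLast? = some j ∧ p.Nodup)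
    (hPne : ∀ i ∈ R, ∀ j ∈ R, i ≠ j → (P i j).Nonempty)
    (x' : V → V → ℝ) (hx' : ∀ i j, 0 ≤ x' i j) :
    ∀ i ∈ R, ∑ j ∈ R.erase i, x' i j ≤ ∑ u, proj R P x' i u := by
  intro i hi
  have hterm : ∀ a b u, 0 ≤ (((P a b).filter (fun p => (i, u) ∈ walkSteps p)).card : ℝ)
      * x' a b / ((P a b).card : ℝ) :=
    fun a b u => div_nonneg (mul_nonneg (Nat.cast_nonneg _) (hx' a b)) (Nat.cast_nonneg _)
  have key : ∀ j ∈ R.erase i, x' i j ≤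
      ∑ u, (((P i j).filter (fun p => (i, u) ∈ walkSteps p)).card : ℝ)
        * x' i j / ((P i j).card : ℝ) := by
    intro j hj
    obtain ⟨hji, hjR⟩ := Finset.mem_erase.mp hj
    have hij : i ≠ j := fun h => hji h.symm
    have hne := hPne i hi j hjR hij
    have hcpos : (0:ℝ) < ((P i j).card : ℝ) := by
      exact_mod_cast Finset.card_pos.mpr hne
    have hexists : ∀ p ∈ P i j, ∃ u, (i, u) ∈ walkSteps p := by
      intro p hp
      obtain ⟨h1, h2, _⟩ := hP i hi j hjR p hp
      match p with
      | [] => simp at h1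
      | [a] =>
        simp at h1 h2
        exact absurd (h1.symm.trans h2) hij
      | a :: b :: t =>
        simp at h1
        subst h1
        exact ⟨b, by simp [walkSteps]⟩
    have hcount : (P i j).card ≤
        ∑ u, ((P i j).filter (fun p => (i, u) ∈ walkSteps p)).card := by
      calc (P i j).card = ∑ p ∈ P i j, 1 := (Finset.card_eq_sum_ones _)
        _ ≤ ∑ p ∈ P i j, (Finset.univ.filter (fun u => (i, u) ∈ walkSteps p)).card := by
            apply Finset.sum_le_sum
            intro p hp
            obtain ⟨u, hu⟩ := hexists p hp
            exact Finset.card_pos.mpr ⟨u, by simp [hu]⟩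
        _ = ∑ u, ((P i j).filter (fun p => (i, u) ∈ walkSteps p)).card := by
            simp_rw [Finset.card_filter]
            rw [Finset.sum_comm]
    have hsum : ((P i j).card : ℝ) ≤
        ∑ u, (((P i j).filter (fun p => (i, u) ∈ walkSteps p)).card : ℝ) := by
      exact_mod_cast hcount
    calc x' i j = ((P i j).card : ℝ) * x' i j / ((P i j).card : ℝ) := by
          field_simp
      _ ≤ (∑ u, (((P i j).filter (fun p => (i, u) ∈ walkSteps p)).card : ℝ))
            * x' i j / ((P i j).card : ℝ) := by
          gcongr
          exact hx' i j
      _ = ∑ u, (((P i j).filter (fun p => (i, u) ∈ walkSteps p)).card : ℝ)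
            * x' i j / ((P i j).card : ℝ) := by
          rw [Finset.sum_mul, Finset.sum_div]
  have h1 : ∑ u, proj R P x' i u = ∑ a ∈ R, ∑ b ∈ R,
      ∑ u, (((P a b).filter (fun p => (i, u) ∈ walkSteps p)).card : ℝ)
        * x' a b / ((P a b).card : ℝ) := by
    unfold proj
    rw [Finset.sum_comm]
    refine Finset.sum_congr rfl fun a _ => ?_
    rw [Finset.sum_comm]
  rw [h1]
  calc ∑ j ∈ R.erase i, x' i j
      ≤ ∑ b ∈ R.erase i, ∑ u, (((P i b).filter (fun p => (i, u) ∈ walkSteps p)).card : ℝ)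
          * x' i b / ((P i b).card : ℝ) := Finset.sum_le_sum key
    _ ≤ ∑ b ∈ R, ∑ u, (((P i b).filter (fun p => (i, u) ∈ walkSteps p)).card : ℝ)
          * x' i b / ((P i b).card : ℝ) :=
        Finset.sum_le_sum_of_subset_of_nonneg (Finset.erase_subset _ _)
          (fun b _ _ => Finset.sum_nonneg fun u _ => hterm i b u)
    _ ≤ ∑ a ∈ R, ∑ b ∈ R, ∑ u, (((P a b).filter (fun p => (i, u) ∈ walkSteps p)).card : ℝ)
          * x' a b / ((P a b).card : ℝ) :=
        Finset.single_le_sum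
          (fun a _ => Finset.sum_nonneg fun b _ => Finset.sum_nonneg fun u _ => hterm a b u) hi
end

section
/- The projection proj preserves total cost: for any x' ∈ ℝ^{R×R}, the vector x = proj(x') satisfies ∑_{(uv)∈A} d_{uv} x_{uv} = ∑_{i,j∈R} d(i,j) x'_{ij}. -/
/-- Total weight of a path. -/
def pathLength {V : Type*} (d : V → V → ℝ) (w : List V) : ℝ :=
  ((walkSteps w).map (fun p => d p.1 p.2)).sum

/-!
Double counting: weighting every arc by the number of paths of `P i j` through it and summing
against `d` is the same as summing the lengths of these paths, each of which is `dist i j`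
(a path without repeated vertices uses every arc at most once). Averaging over `P i j` turns
this into `dist i j`, and the identity is linear in `x'`.
-/

open Finset

section

variable {V : Type*}

lemma walkSteps_nodup {w : List V} (h : w.Nodup) : (walkSteps w).Nodup := by
  have hsnd : ((w.zip w.tail).map Prod.snd).Nodup := by
    rw [List.map_snd_zip (by cases w <;> simp)]
    exact h.tail
  exact hsnd.of_map _

variable [Fintype V] [DecidableEq V]

lemma pathLength_eq_sum_ite (d : V → V → ℝ) {p : List V} (h : p.Nodup) :
    pathLength d p = ∑ u, ∑ v, if (u, v) ∈ walkSteps p then d u v else 0 := by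
  rw [pathLength, ← List.sum_toFinset _ (walkSteps_nodup h), ← Fintype.sum_prod_type']
  simp_rw [← List.mem_toFinset]
  rw [sum_ite_mem, univ_inter]

lemma sum_mul_card_filter_mem_walkSteps (d : V → V → ℝ) {S : Finset (List V)}
    (hS : ∀ p ∈ S, p.Nodup) :
    ∑ u, ∑ v, d u v * (#(S.filter fun p => (u, v) ∈ walkSteps p) : ℝ) =
      ∑ p ∈ S, pathLength d p := by
  have hcount : ∀ u v, d u v * (#(S.filter fun p => (u, v) ∈ walkSteps p) : ℝ) =
      ∑ p ∈ S, if (u, v) ∈ walkSteps p then d u v else 0 := by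
    intro u v
    rw [card_filter, Nat.cast_sum, mul_sum]
    exact sum_congr rfl fun p _ => by split_ifs <;> simp
  simp_rw [hcount]
  rw [sum_comm_cycle]
  exact sum_congr rfl fun p hp => (pathLength_eq_sum_ite d (hS p hp)).symm

end

/-- The projection preserves total cost: `∑_{(uv)} d_{uv} (proj x')_{uv} = ∑_{i,j ∈ R} d(i,j) x'_{ij}`,
where every path in `P i j` has length exactly the shortest-path distance `dist i j`. -/
theorem proj_preserves_cost
    {V : Type*} [Fintype V] [DecidableEq V]
    (R : Finset V) (P : V → V → Finset (List V))
    (d : V → V → ℝ) (dist : V → V → ℝ)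
    (hP : ∀ i ∈ R, ∀ j ∈ R, ∀ p ∈ P i j,
      p.head? = some i ∧ p.getLast? = some j ∧ p.Nodup ∧ pathLength d p = dist i j)
    (hPne : ∀ i ∈ R, ∀ j ∈ R, (P i j).Nonempty)
    (x' : V → V → ℝ) :
    ∑ u, ∑ v, d u v * proj R P x' u v = ∑ i ∈ R, ∑ j ∈ R, dist i j * x' i j := by
  have hpair : ∀ i ∈ R, ∀ j ∈ R,
      ∑ u, ∑ v, d u v * (#((P i j).filter fun p => (u, v) ∈ walkSteps p) : ℝ) =
        #(P i j) * dist i j := by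
    intro i hi j hj
    rw [sum_mul_card_filter_mem_walkSteps d fun p hp => (hP i hi j hj p hp).2.2.1,
      sum_congr rfl fun p hp => (hP i hi j hj p hp).2.2.2, sum_const, nsmul_eq_mul]
  calc ∑ u, ∑ v, d u v * proj R P x' u v
      = ∑ i ∈ R, ∑ j ∈ R, x' i j / #(P i j) *
          ∑ u, ∑ v, d u v * (#((P i j).filter fun p => (u, v) ∈ walkSteps p) : ℝ) := by
        simp only [proj, mul_sum]
        rw [sum_comm_cycle]
        refine sum_congr rfl fun i _ => ?_
        rw [sum_comm_cycle]
        exact sum_congr rfl fun j _ => sum_congr rfl fun u _ => sum_congr rfl fun v _ => by ring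
    _ = ∑ i ∈ R, ∑ j ∈ R, dist i j * x' i j := by
        refine sum_congr rfl fun i hi => sum_congr rfl fun j hj => ?_
        have hcard : (#(P i j) : ℝ) ≠ 0 := by exact_mod_cast (hPne i hi j hj).card_ne_zero
        rw [hpair i hi j hj]
        field_simp
end

section
/- The optimal value of the linear relaxation of the Steiner single-commodity-flow formulation (SCFS) is at most the optimal value of the linear relaxation of the standard single-commodity-flow TSP formulation (SCF): for every feasible fractional solution (x', y') of SCF, the pair (proj(x'), proj(y')) is feasible for the relaxation of SCFS with equal objective value; hence z*_{LP}(SCFS) ≤ z*_{LP}(SCF). -/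
/-- Feasibility for the linear relaxation of the standard single-commodity-flow TSP
formulation (SCF) on the complete directed graph over the required set `R`. -/
def SCFFeasible {V : Type*} [DecidableEq V] (R : Finset V) (depot : V) (n : ℕ)
    (x' y' : V → V → ℝ) : Prop :=
  (∀ i ∈ R, ∑ j ∈ R.erase i, x' i j = 1) ∧
  (∀ i ∈ R, ∑ j ∈ R.erase i, x' j i = 1) ∧
  (∀ i ∈ R.erase depot, ∑ j ∈ R.erase i, y' j i - ∑ j ∈ R.erase i, y' i j = 1) ∧
  (∀ i ∈ R, ∀ j ∈ R, y' i j ≤ (n : ℝ) * x' i j) ∧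
  (∀ i j, 0 ≤ x' i j) ∧ (∀ i j, 0 ≤ y' i j)

/-- Feasibility for the linear relaxation of the Steiner single-commodity-flow
formulation (SCFS) on the sparse directed graph `D = (V, A)`. -/
def SCFSFeasible {V : Type*} [Fintype V] [DecidableEq V] (A : V → V → Prop)
    (R : Finset V) (depot : V) (n : ℕ) (x y : V → V → ℝ) : Prop :=
  (∀ u v, ¬ A u v → x u v = 0) ∧
  (∀ u v, ¬ A u v → y u v = 0) ∧
  (∀ i ∈ R, 1 ≤ ∑ j, x i j) ∧
  (∀ i : V, ∑ j, x i j = ∑ j, x j i) ∧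
  (∀ i ∈ R.erase depot, ∑ j, y j i - ∑ j, y i j = 1) ∧
  (∀ i : V, i ∉ R → ∑ j, y j i - ∑ j, y i j = 0) ∧
  (∀ u v, y u v ≤ (n : ℝ) * x u v) ∧
  (∀ u v, 0 ≤ x u v) ∧ (∀ u v, 0 ≤ y u v)

section Paths

variable {V : Type*}

theorem walkSteps_cons_cons (a b : V) (t : List V) :
    walkSteps (a :: b :: t) = (a, b) :: walkSteps (b :: t) := rfl

theorem pathLength_cons_cons (g : V → V → ℝ) (a b : V) (t : List V) :
    pathLength g (a :: b :: t) = g a b + pathLength g (b :: t) := by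
  simp only [pathLength, walkSteps_cons_cons, List.map_cons, List.sum_cons]

theorem List.Nodup.walkSteps {p : List V} (hp : p.Nodup) : (walkSteps p).Nodup :=
  .of_map Prod.snd <| by
    rw [_root_.walkSteps, List.map_snd_zip (by simp)]
    exact hp.sublist (List.tail_sublist p)

theorem pathLength_nonneg {g : V → V → ℝ} (hg : ∀ u v, 0 ≤ g u v) (p : List V) :
    0 ≤ pathLength g p :=
  List.sum_nonneg <| by simp only [List.mem_map]; rintro _ ⟨q, -, rfl⟩; exact hg q.1 q.2

theorem pathLength_sub_eq {φ : V → ℝ} {p : List V} {a b : V} (ha : p.head? = some a)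
    (hb : p.getLast? = some b) : pathLength (fun u v => φ v - φ u) p = φ b - φ a := by
  induction p generalizing a with
  | nil => simp at ha
  | cons x t ih =>
    obtain rfl : x = a := by simpa using ha
    cases t with
    | nil => simp_all [pathLength, walkSteps]
    | cons y t =>
      rw [pathLength_cons_cons, ih rfl (by simpa [List.getLast?_cons_cons] using hb)]
      ring

theorem one_le_pathLength_ite_eq_head [DecidableEq V] {p : List V} {a b : V}
    (ha : p.head? = some a) (hb : p.getLast? = some b) (hab : a ≠ b) :
    1 ≤ pathLength (fun u _ => if u = a then 1 else 0) p := by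
  match p, ha, hb with
  | [x], ha, hb => simp_all
  | x :: y :: t, ha, _ =>
    obtain rfl : x = a := by simpa using ha
    rw [pathLength_cons_cons, if_pos rfl, le_add_iff_nonneg_right]
    exact pathLength_nonneg (fun _ _ => by positivity) _

theorem sum_ite_mem_walkSteps [Fintype V] [DecidableEq V] {p : List V}
    (hp : (walkSteps p).Nodup) (g : V → V → ℝ) :
    ∑ q : V × V, (if q ∈ walkSteps p then g q.1 q.2 else 0) = pathLength g p := by
  rw [pathLength, ← List.sum_toFinset _ hp,
    ← Finset.sum_ite_mem_eq (walkSteps p).toFinset]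
  simp only [List.mem_toFinset]

end Paths

section Projection

variable {V : Type*} [DecidableEq V] (R : Finset V) (P : V → V → Finset (List V))

theorem sum_sum_ite_sub_ite_mul (s : Finset V) (z : V → V → ℝ) (k : V) :
    ∑ i ∈ s, ∑ j ∈ s, ((if j = k then 1 else 0) - (if i = k then 1 else 0)) * z i j =
      if k ∈ s then ∑ i ∈ s.erase k, z i k - ∑ j ∈ s.erase k, z k j else 0 := by
  simp only [sub_mul, ite_mul, one_mul, zero_mul, Finset.sum_sub_distrib, Finset.sum_ite_eq',
    Finset.sum_ite_irrel, Finset.sum_const_zero]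
  split_ifs with hk
  · rw [← Finset.add_sum_erase s _ hk, ← Finset.add_sum_erase s (z k) hk]
    ring
  · simp

theorem proj_eq_sum_ite (z : V → V → ℝ) (u v : V) :
    proj R P z u v = ∑ i ∈ R, ∑ j ∈ R, ∑ p ∈ P i j,
      if (u, v) ∈ walkSteps p then z i j / (P i j).card else 0 := by
  simp only [proj, Finset.natCast_card_filter, Finset.sum_mul, Finset.sum_div, ite_mul,
    one_mul, zero_mul, ite_div, zero_div]

theorem proj_nonneg {z : V → V → ℝ} (hz : ∀ i j, 0 ≤ z i j) (u v : V) :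
    0 ≤ proj R P z u v :=
  Finset.sum_nonneg fun i _ => Finset.sum_nonneg fun j _ => by have := hz i j; positivity

theorem proj_eq_zero {u v : V} (h : ∀ i ∈ R, ∀ j ∈ R, ∀ p ∈ P i j, (u, v) ∉ walkSteps p)
    (z : V → V → ℝ) : proj R P z u v = 0 := by
  rw [proj_eq_sum_ite]
  exact Finset.sum_eq_zero fun i hi => Finset.sum_eq_zero fun j hj =>
    Finset.sum_eq_zero fun p hp => if_neg (h i hi j hj p hp)

theorem proj_le_const_mul {x y : V → V → ℝ} {c : ℝ} (h : ∀ i ∈ R, ∀ j ∈ R, y i j ≤ c * x i j)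
    (u v : V) : proj R P y u v ≤ c * proj R P x u v := by
  simp only [proj, Finset.mul_sum]
  gcongr with i hi j hj
  calc _ ≤ ((P i j).filter fun p => (u, v) ∈ walkSteps p).card * (c * x i j) / (P i j).card := by
        gcongr; exact h i hi j hj
    _ = _ := by ring

variable [Fintype V]

theorem sum_sum_mul_proj (hnd : ∀ i ∈ R, ∀ j ∈ R, ∀ p ∈ P i j, (walkSteps p).Nodup)
    (g z : V → V → ℝ) :
    ∑ u, ∑ v, g u v * proj R P z u v =
      ∑ i ∈ R, ∑ j ∈ R, (∑ p ∈ P i j, pathLength g p) * (z i j / (P i j).card) := by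
  simp only [proj_eq_sum_ite, Finset.mul_sum, Finset.sum_mul, mul_ite, mul_zero]
  rw [← Fintype.sum_prod_type', Finset.sum_comm]
  refine Finset.sum_congr rfl fun i hi => ?_
  rw [Finset.sum_comm]
  refine Finset.sum_congr rfl fun j hj => ?_
  rw [Finset.sum_comm]
  refine Finset.sum_congr rfl fun p hp => ?_
  rw [← sum_ite_mem_walkSteps (hnd i hi j hj p hp), Finset.sum_mul]
  simp only [ite_mul, zero_mul]

variable {R P} (hnd : ∀ i ∈ R, ∀ j ∈ R, ∀ p ∈ P i j, (walkSteps p).Nodup)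
  (hne : ∀ i ∈ R, ∀ j ∈ R, (P i j).Nonempty)
include hnd hne

theorem sum_sum_mul_proj_of_pathLength_eq {g h : V → V → ℝ}
    (hg : ∀ i ∈ R, ∀ j ∈ R, ∀ p ∈ P i j, pathLength g p = h i j) (z : V → V → ℝ) :
    ∑ u, ∑ v, g u v * proj R P z u v = ∑ i ∈ R, ∑ j ∈ R, h i j * z i j := by
  rw [sum_sum_mul_proj R P hnd]
  refine Finset.sum_congr rfl fun i hi => Finset.sum_congr rfl fun j hj => ?_
  have hcard : ((P i j).card : ℝ) ≠ 0 := by simpa using (hne i hi j hj).ne_empty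
  rw [Finset.sum_congr rfl (hg i hi j hj), Finset.sum_const, nsmul_eq_mul]
  field_simp

theorem sum_sum_mul_le_sum_sum_mul_proj {g h z : V → V → ℝ}
    (hg : ∀ i ∈ R, ∀ j ∈ R, ∀ p ∈ P i j, h i j ≤ pathLength g p)
    (hz : ∀ i ∈ R, ∀ j ∈ R, 0 ≤ z i j) :
    ∑ i ∈ R, ∑ j ∈ R, h i j * z i j ≤ ∑ u, ∑ v, g u v * proj R P z u v := by
  rw [sum_sum_mul_proj R P hnd]
  refine Finset.sum_le_sum fun i hi => Finset.sum_le_sum fun j hj => ?_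
  have hcard : (0 : ℝ) < (P i j).card := by simpa using hne i hi j hj
  have := hz i hi j hj
  calc h i j * z i j = (∑ _p ∈ P i j, h i j) * (z i j / (P i j).card) := by
        rw [Finset.sum_const, nsmul_eq_mul]; field_simp
    _ ≤ _ := by gcongr with p hp; exact hg i hi j hj p hp

variable (hends : ∀ i ∈ R, ∀ j ∈ R, ∀ p ∈ P i j, p.head? = some i ∧ p.getLast? = some j)
include hends

theorem sum_proj_in_sub_sum_proj_out (z : V → V → ℝ) (k : V) :
    ∑ u, proj R P z u k - ∑ v, proj R P z k v =
      if k ∈ R then ∑ i ∈ R.erase k, z i k - ∑ j ∈ R.erase k, z k j else 0 := by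
  rw [← sum_sum_ite_sub_ite_mul, ← sum_sum_mul_proj_of_pathLength_eq hnd hne
    (fun i hi j hj p hp => pathLength_sub_eq (hends i hi j hj p hp).1 (hends i hi j hj p hp).2)]
  simp only [sub_mul, ite_mul, one_mul, zero_mul, Finset.sum_sub_distrib, Finset.sum_ite_eq',
    Finset.mem_univ, if_true, Finset.sum_ite_irrel, Finset.sum_const_zero]

theorem sum_erase_le_sum_proj_out {z : V → V → ℝ} (hz : ∀ i ∈ R, ∀ j ∈ R, 0 ≤ z i j)
    {k : V} (hk : k ∈ R) :
    ∑ j ∈ R.erase k, z k j ≤ ∑ v, proj R P z k v := by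
  have hout : ∀ i ∈ R, ∀ j ∈ R, ∀ p ∈ P i j, (if i = k ∧ j ≠ k then 1 else 0) ≤
      pathLength (fun u _ => if u = k then 1 else 0) p := by
    intro i hi j hj p hp
    split_ifs with h
    · obtain ⟨rfl, hjk⟩ := h
      exact one_le_pathLength_ite_eq_head (hends i hi j hj p hp).1 (hends i hi j hj p hp).2 hjk.symm
    · exact pathLength_nonneg (fun _ _ => by positivity) p
  convert sum_sum_mul_le_sum_sum_mul_proj hnd hne hout hz using 1
  · simp only [ite_and, ite_mul, one_mul, zero_mul, Finset.sum_ite_irrel, Finset.sum_const_zero,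
      Finset.sum_ite_eq', if_pos hk]
    rw [Finset.sum_ite, Finset.sum_const_zero, add_zero, Finset.filter_ne']
  · simp [ite_mul, Finset.sum_ite_eq']

theorem SCFFeasible.scfsFeasible_proj {A : V → V → Prop}
    (harcs : ∀ i ∈ R, ∀ j ∈ R, ∀ p ∈ P i j, ∀ q ∈ walkSteps p, A q.1 q.2)
    {depot : V} {n : ℕ} {x' y' : V → V → ℝ} (h : SCFFeasible R depot n x' y') :
    SCFSFeasible A R depot n (proj R P x') (proj R P y') := by
  obtain ⟨hout, hin, hflow, hcap, hx, hy⟩ := h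
  have hnet := sum_proj_in_sub_sum_proj_out hnd hne hends
  have hA : ∀ u v, ¬ A u v → ∀ i ∈ R, ∀ j ∈ R, ∀ p ∈ P i j, (u, v) ∉ walkSteps p :=
    fun u v huv i hi j hj p hp hmem => huv (harcs i hi j hj p hp _ hmem)
  refine ⟨fun u v huv => proj_eq_zero R P (hA u v huv) x',
    fun u v huv => proj_eq_zero R P (hA u v huv) y',
    fun k hk => (hout k hk).symm.trans_le
      (sum_erase_le_sum_proj_out hnd hne hends (fun i _ j _ => hx i j) hk),
    fun k => ?_, fun k hk => ?_, fun k hk => ?_,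
    proj_le_const_mul R P hcap, proj_nonneg R P hx, proj_nonneg R P hy⟩
  · have hk := hnet x' k
    split_ifs at hk with hkR
    · rw [hout k hkR, hin k hkR] at hk
      linarith
    · linarith
  · rw [hnet, if_pos (Finset.mem_of_mem_erase hk), hflow k hk]
  · rw [hnet, if_neg hk]

end Projection

theorem scfs_relaxation_le_scf_relaxation_general
    {V : Type*} [Fintype V] [DecidableEq V]
    (A : V → V → Prop) (R : Finset V) (depot : V)
    (n : ℕ)
    (d : V → V → ℝ) (hd : ∀ u v, 0 ≤ d u v)
    (dist : V → V → ℝ)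
    (P : V → V → Finset (List V))
    (hP : ∀ i ∈ R, ∀ j ∈ R, ∀ p ∈ P i j,
      p.head? = some i ∧ p.getLast? = some j ∧ p.Nodup ∧
      (∀ q ∈ walkSteps p, A q.1 q.2) ∧ pathLength d p = dist i j)
    (hPne : ∀ i ∈ R, ∀ j ∈ R, (P i j).Nonempty) :
    (∀ x' y', SCFFeasible R depot n x' y' →
      SCFSFeasible A R depot n (proj R P x') (proj R P y') ∧
      ∑ u, ∑ v, d u v * proj R P x' u v = ∑ i ∈ R, ∑ j ∈ R, dist i j * x' i j)
    ∧
    ((∃ x' y', SCFFeasible R depot n x' y') →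
      sInf {c : ℝ | ∃ x y, SCFSFeasible A R depot n x y ∧ c = ∑ u, ∑ v, d u v * x u v}
        ≤ sInf {c : ℝ | ∃ x' y', SCFFeasible R depot n x' y' ∧
            c = ∑ i ∈ R, ∑ j ∈ R, dist i j * x' i j}) := by
  have hnd i hi j hj p hp : (walkSteps p).Nodup := (hP i hi j hj p hp).2.2.1.walkSteps
  have hends i hi j hj p hp := And.intro (hP i hi j hj p hp).1 (hP i hi j hj p hp).2.1
  have hproj x' y' (h : SCFFeasible R depot n x' y') :
      SCFSFeasible A R depot n (proj R P x') (proj R P y') ∧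
        ∑ u, ∑ v, d u v * proj R P x' u v = ∑ i ∈ R, ∑ j ∈ R, dist i j * x' i j :=
    ⟨h.scfsFeasible_proj hnd hPne hends fun i hi j hj p hp => (hP i hi j hj p hp).2.2.2.1,
      sum_sum_mul_proj_of_pathLength_eq hnd hPne
        (fun i hi j hj p hp => (hP i hi j hj p hp).2.2.2.2) x'⟩
  refine ⟨hproj, fun ⟨x', y', h⟩ => csInf_le_csInf ?_ ⟨_, x', y', h, rfl⟩ ?_⟩
  · refine ⟨0, ?_⟩
    rintro _ ⟨x, y, ⟨-, -, -, -, -, -, -, hx, -⟩, rfl⟩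
    exact Finset.sum_nonneg fun u _ => Finset.sum_nonneg fun v _ => mul_nonneg (hd u v) (hx u v)
  · rintro _ ⟨x', y', h, rfl⟩
    exact ⟨_, _, (hproj x' y' h).1, (hproj x' y' h).2.symm⟩

/-- Every feasible fractional solution `(x', y')` of SCF projects to a feasible
fractional solution `(proj x', proj y')` of SCFS with equal objective value; hence the
optimal value of the SCFS linear relaxation is at most that of the SCF relaxation. -/
theorem scfs_relaxation_le_scf_relaxation
    {V : Type*} [Fintype V] [DecidableEq V]
    (A : V → V → Prop) (R : Finset V) (depot : V) (hdep : depot ∈ R)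
    (n : ℕ) (hn : n = R.card - 1)
    (d : V → V → ℝ) (hd : ∀ u v, 0 ≤ d u v)
    (dist : V → V → ℝ) (hdist : ∀ i j, 0 ≤ dist i j)
    (P : V → V → Finset (List V))
    (hP : ∀ i ∈ R, ∀ j ∈ R, ∀ p ∈ P i j,
      p.head? = some i ∧ p.getLast? = some j ∧ p.Nodup ∧
      (∀ q ∈ walkSteps p, A q.1 q.2) ∧ pathLength d p = dist i j)
    (hPne : ∀ i ∈ R, ∀ j ∈ R, (P i j).Nonempty) :
    (∀ x' y', SCFFeasible R depot n x' y' →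
      SCFSFeasible A R depot n (proj R P x') (proj R P y') ∧
      ∑ u, ∑ v, d u v * proj R P x' u v = ∑ i ∈ R, ∑ j ∈ R, dist i j * x' i j)
    ∧
    ((∃ x' y', SCFFeasible R depot n x' y') →
      sInf {c : ℝ | ∃ x y, SCFSFeasible A R depot n x y ∧ c = ∑ u, ∑ v, d u v * x u v}
        ≤ sInf {c : ℝ | ∃ x' y', SCFFeasible R depot n x' y' ∧
            c = ∑ i ∈ R, ∑ j ∈ R, dist i j * x' i j}) :=
  scfs_relaxation_le_scf_relaxation_general A R depot n d hd dist P hP hPne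
end

section
/- The SCFS linear relaxation can be strictly weaker than the SCF relaxation: there exists an instance (a directed Steiner graph with 3 required vertices, explicitly given with 8 vertices and specified arc weights) for which the linear relaxation of SCFS has optimal value at most 18 while the linear relaxation of SCF has optimal value 20. -/
/-- The Steiner graph of the counterexample: vertices `0 = depot`, `1, 2` products,
`3 = a`, `4 = b`, `5 = c`, `6 = e`, `7 = f`; symmetric edge weights
`(0,e)=4, (e,f)=4, (f,a)=4, (a,2)=2, (2,b)=2, (b,1)=2, (1,c)=2, (c,0)=4, (e,b)=4`. -/
def exW : Fin 8 → Fin 8 → ℝ := fun u v =>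
  let e : ℕ × ℕ := if (u : ℕ) ≤ (v : ℕ) then ((u : ℕ), (v : ℕ)) else ((v : ℕ), (u : ℕ))
  if e = (0, 6) then 4 else if e = (6, 7) then 4 else if e = (3, 7) then 4
  else if e = (2, 3) then 2 else if e = (2, 4) then 2 else if e = (1, 4) then 2
  else if e = (1, 5) then 2 else if e = (0, 5) then 4 else if e = (4, 6) then 4 else 0

/-- Arc set of the counterexample Steiner graph. -/
def exArc (u v : Fin 8) : Prop := exW u v ≠ 0

/-- Shortest distances between the required vertices `{0, 1, 2}`:
`d(0,1) = 6`, `d(0,2) = 10`, `d(1,2) = 4`. -/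
def exDist : Fin 8 → Fin 8 → ℝ := fun u v =>
  let e : ℕ × ℕ := if (u : ℕ) ≤ (v : ℕ) then ((u : ℕ), (v : ℕ)) else ((v : ℕ), (u : ℕ))
  if e = (0, 1) then 6 else if e = (0, 2) then 10 else if e = (1, 2) then 4 else 0

lemma fv0 : ((0:Fin 8):ℕ) = 0 := rfl
lemma fv1 : ((1:Fin 8):ℕ) = 1 := rfl
lemma fv2 : ((2:Fin 8):ℕ) = 2 := rfl
lemma fv3 : ((3:Fin 8):ℕ) = 3 := rfl
lemma fv4 : ((4:Fin 8):ℕ) = 4 := rfl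
lemma fv5 : ((5:Fin 8):ℕ) = 5 := rfl
lemma fv6 : ((6:Fin 8):ℕ) = 6 := rfl
lemma fv7 : ((7:Fin 8):ℕ) = 7 := rfl

/-- SCFS fractional solution `x`. -/
noncomputable def exX : Fin 8 → Fin 8 → ℝ := fun u v =>
  if u = 0 ∧ v = 5 ∨ u = 5 ∧ v = 0 ∨ u = 5 ∧ v = 1 ∨ u = 1 ∧ v = 5 then 1
  else if u = 1 ∧ v = 4 ∨ u = 4 ∧ v = 1 ∨ u = 4 ∧ v = 2 ∨ u = 2 ∧ v = 4
       ∨ u = 2 ∧ v = 3 ∨ u = 3 ∧ v = 2 then 1/2 else 0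

/-- SCFS flow `y`. -/
noncomputable def exY : Fin 8 → Fin 8 → ℝ := fun u v =>
  if u = 0 ∧ v = 5 ∨ u = 5 ∧ v = 1 then 2
  else if u = 1 ∧ v = 4 ∨ u = 4 ∧ v = 2 then 1 else 0

/-- SCF integral tour `x'`. -/
noncomputable def exX' : Fin 8 → Fin 8 → ℝ := fun i j =>
  if i = 0 ∧ j = 1 ∨ i = 1 ∧ j = 2 ∨ i = 2 ∧ j = 0 then 1 else 0

/-- SCF flow `y'`. -/
noncomputable def exY' : Fin 8 → Fin 8 → ℝ := fun i j =>
  if i = 0 ∧ j = 1 then 2 else if i = 1 ∧ j = 2 then 1 else 0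

lemma sum_trip (f : Fin 8 → ℝ) :
    ∑ i ∈ ({0,1,2} : Finset (Fin 8)), f i = f 0 + f 1 + f 2 := by
  rw [show ({0,1,2} : Finset (Fin 8)) = insert 0 {1,2} from rfl,
    Finset.sum_insert (by decide), Finset.sum_pair (by decide)]
  ring

lemma sum_pair01 (f : Fin 8 → ℝ) : ∑ i ∈ ({0,1} : Finset (Fin 8)), f i = f 0 + f 1 :=
  Finset.sum_pair (by decide)
lemma sum_pair02 (f : Fin 8 → ℝ) : ∑ i ∈ ({0,2} : Finset (Fin 8)), f i = f 0 + f 2 :=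
  Finset.sum_pair (by decide)
lemma sum_pair12 (f : Fin 8 → ℝ) : ∑ i ∈ ({1,2} : Finset (Fin 8)), f i = f 1 + f 2 :=
  Finset.sum_pair (by decide)

lemma er0 : ({0,1,2} : Finset (Fin 8)).erase 0 = {1,2} := by decide
lemma er1 : ({0,1,2} : Finset (Fin 8)).erase 1 = {0,2} := by decide
lemma er2 : ({0,1,2} : Finset (Fin 8)).erase 2 = {0,1} := by decide

set_option maxHeartbeats 4000000 in
/-- On this explicit instance with required vertices `{0,1,2}` and `n = 2`, the SCFS
linear relaxation has optimal value at most 18, while the SCF linear relaxation has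
optimal value exactly 20. -/
theorem scfs_relaxation_strictly_weaker_example :
    (∃ x y : Fin 8 → Fin 8 → ℝ, SCFSFeasible exArc {0, 1, 2} 0 2 x y ∧
      ∑ u, ∑ v, exW u v * x u v ≤ 18) ∧
    (∀ x' y' : Fin 8 → Fin 8 → ℝ, SCFFeasible ({0, 1, 2} : Finset (Fin 8)) 0 2 x' y' →
      20 ≤ ∑ i ∈ ({0, 1, 2} : Finset (Fin 8)), ∑ j ∈ ({0, 1, 2} : Finset (Fin 8)),
        exDist i j * x' i j) ∧
    (∃ x' y' : Fin 8 → Fin 8 → ℝ, SCFFeasible ({0, 1, 2} : Finset (Fin 8)) 0 2 x' y' ∧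
      ∑ i ∈ ({0, 1, 2} : Finset (Fin 8)), ∑ j ∈ ({0, 1, 2} : Finset (Fin 8)),
        exDist i j * x' i j = 20) := by
  refine ⟨⟨exX, exY, ⟨?_, ?_, ?_, ?_, ?_, ?_, ?_, ?_, ?_⟩, ?_⟩, ?_, ?_⟩
  · -- x supported on arcs
    intro u v h
    fin_cases u <;> fin_cases v <;>
      simp_all [exArc, exW, exX, Fin.ext_iff, Prod.ext_iff,
        fv0, fv1, fv2, fv3, fv4, fv5, fv6, fv7] <;> norm_num
  · -- y supported on arcs
    intro u v h
    fin_cases u <;> fin_cases v <;>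
      simp_all [exArc, exW, exY, Fin.ext_iff, Prod.ext_iff,
        fv0, fv1, fv2, fv3, fv4, fv5, fv6, fv7] <;> norm_num
  · -- outdegree at least 1
    intro i hi
    fin_cases hi <;> simp only [Fin.sum_univ_eight] <;>
      norm_num [exX, Fin.ext_iff, fv0, fv1, fv2, fv3, fv4, fv5, fv6, fv7]
  · -- x is a circulation
    intro i
    fin_cases i <;> simp only [Fin.sum_univ_eight] <;>
      norm_num [exX, Fin.ext_iff, fv0, fv1, fv2, fv3, fv4, fv5, fv6, fv7]
  · -- y delivers one unit at each required vertex
    intro i hi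
    fin_cases hi <;> simp only [Fin.sum_univ_eight] <;>
      norm_num [exY, Fin.ext_iff, fv0, fv1, fv2, fv3, fv4, fv5, fv6, fv7]
  · -- y conserved at Steiner vertices
    intro i hi
    fin_cases i <;> simp only [Fin.sum_univ_eight] <;>
      simp_all [exY, Fin.ext_iff, fv0, fv1, fv2, fv3, fv4, fv5, fv6, fv7] <;> norm_num
  · -- capacity y ≤ 2 x
    intro u v
    fin_cases u <;> fin_cases v <;>
      norm_num [exX, exY, Fin.ext_iff, fv0, fv1, fv2, fv3, fv4, fv5, fv6, fv7]
  · -- x nonneg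
    intro u v
    simp only [exX]; split_ifs <;> norm_num
  · -- y nonneg
    intro u v
    simp only [exY]; split_ifs <;> norm_num
  · -- cost at most 18
    simp only [Fin.sum_univ_eight]
    norm_num [exW, exX, Prod.ext_iff, Fin.ext_iff,
      fv0, fv1, fv2, fv3, fv4, fv5, fv6, fv7]
  · -- every SCF solution costs at least 20
    rintro x' y' ⟨h1, h2, -, -, -, -⟩
    have o0 := h1 0 (by decide); have o1 := h1 1 (by decide); have o2 := h1 2 (by decide)
    have i0 := h2 0 (by decide); have i1 := h2 1 (by decide); have i2 := h2 2 (by decide)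
    rw [er0, sum_pair12] at o0 i0
    rw [er1, sum_pair02] at o1 i1
    rw [er2, sum_pair01] at o2 i2
    rw [sum_trip]
    simp only [sum_trip]
    norm_num [exDist, Prod.ext_iff, Fin.ext_iff, fv0, fv1, fv2, fv3, fv4, fv5, fv6, fv7]
    linarith
  · -- an SCF solution of cost exactly 20
    refine ⟨exX', exY', ⟨?_, ?_, ?_, ?_, ?_, ?_⟩, ?_⟩
    · intro i hi
      fin_cases hi
      · rw [er0, sum_pair12]
        norm_num [exX', Fin.ext_iff, fv0, fv1, fv2, fv3, fv4, fv5]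
      · rw [er1, sum_pair02]
        norm_num [exX', Fin.ext_iff, fv0, fv1, fv2, fv3, fv4, fv5]
      · rw [er2, sum_pair01]
        norm_num [exX', Fin.ext_iff, fv0, fv1, fv2, fv3, fv4, fv5]
    · intro i hi
      fin_cases hi
      · rw [er0, sum_pair12]
        norm_num [exX', Fin.ext_iff, fv0, fv1, fv2, fv3, fv4, fv5]
      · rw [er1, sum_pair02]
        norm_num [exX', Fin.ext_iff, fv0, fv1, fv2, fv3, fv4, fv5]
      · rw [er2, sum_pair01]
        norm_num [exX', Fin.ext_iff, fv0, fv1, fv2, fv3, fv4, fv5]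
    · intro i hi
      rw [er0] at hi
      fin_cases hi
      · rw [er1, sum_pair02, sum_pair02]
        norm_num [exY', Fin.ext_iff, fv0, fv1, fv2, fv3, fv4, fv5]
      · rw [er2, sum_pair01, sum_pair01]
        norm_num [exY', Fin.ext_iff, fv0, fv1, fv2, fv3, fv4, fv5]
    · intro i hi j hj
      fin_cases hi <;> fin_cases hj <;>
        norm_num [exX', exY', Fin.ext_iff, fv0, fv1, fv2, fv3, fv4, fv5]
    · intro i j; simp only [exX']; split_ifs <;> norm_num
    · intro i j; simp only [exY']; split_ifs <;> norm_num
    · rw [sum_trip]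
      simp only [sum_trip]
      norm_num [exDist, exX', Prod.ext_iff, Fin.ext_iff,
        fv0, fv1, fv2, fv3, fv4, fv5, fv6, fv7]
end

section
/- In the flow-strengthening preprocessing, the bound is valid: if in every feasible walk from the depot to vertex i at least n_R(i) required vertices are visited (and their flow units delivered) before reaching i, then in any feasible integral solution of SCFS the amount of flow on any arc (ij) leaving i is at most n − n_R(i); hence the constraint y_{ij} ≤ (n − n_R(i)) x_{ij} is valid. -/
/-- Number of times the closed walk `w` uses the arc `(u, v)`. -/
def arcUsage {V : Type*} [DecidableEq V] (w : List V) (u v : V) : ℕ :=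
  (walkSteps w).count (u, v)

/-- Number of required (non-depot) vertices already visited after the first `k+1`
vertices of the walk `w` (deliveries happen at the first visit). -/
def visitedCount {V : Type*} [DecidableEq V] (R : Finset V) (depot : V)
    (w : List V) (k : ℕ) : ℕ :=
  ((w.take (k + 1)).toFinset ∩ R.erase depot).card

/-- The flow carried along the arc `(i, j)` by the picker following the walk `w`:
the picker leaves the depot with `n` units and delivers one unit at the first visit of
each required vertex, so at step `k` the remaining flow is `n - visitedCount k`. -/
def arcFlow {V : Type*} [DecidableEq V] (R : Finset V) (depot : V) (n : ℕ)
    (w : List V) (i j : V) : ℕ :=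
  ∑ k ∈ Finset.range w.length,
    if w[k]? = some i ∧ w[k + 1]? = some j then n - visitedCount R depot w k else 0

lemma count_steps {V : Type*} [DecidableEq V] (w : List V) (i j : V) :
    (∑ k ∈ Finset.range w.length,
      if w[k]? = some i ∧ w[k + 1]? = some j then 1 else 0) =
      (w.zip w.tail).count (i, j) := by
  induction w with
  | nil => simp
  | cons a w ih =>
    rw [List.length_cons, Finset.sum_range_succ']
    simp only [List.getElem?_cons_succ, List.getElem?_cons_zero]
    cases w with
    | nil => simp
    | cons b t =>
      simp only [List.tail_cons] at ih ⊢
      rw [List.zip_cons_cons, List.count_cons, ← ih]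
      congr 1
      by_cases h : a = i ∧ b = j
      · obtain ⟨rfl, rfl⟩ := h; simp
      · have h1 : ¬ (some a = some i ∧ (b :: t)[0]? = some j) := by
          simpa using h
        have h2 : ((a, b) == (i, j)) = false := by
          simp only [beq_eq_false_iff_ne, ne_eq, Prod.mk.injEq, not_and]
          exact fun ha hb => h ⟨ha, hb⟩
        simp only [h1, h2, if_false, Bool.false_eq_true]

/-- Validity of the strengthened flow bound: if every walk from the depot must have
visited at least `nR i` required vertices upon reaching `i`, then in the integral SCFS
solution induced by any picking tour `w`, the flow on any arc `(i,j)` is at most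
`(n - nR i)` times the usage of that arc; i.e. `y_{ij} ≤ (n - n_R(i)) x_{ij}` is valid. -/
theorem strengthened_flow_bound_valid
    {V : Type*} [Fintype V] [DecidableEq V]
    (A : V → V → Prop) (R : Finset V) (depot : V) (hdep : depot ∈ R)
    (n : ℕ) (hn : n = (R.erase depot).card)
    (w : List V)
    (hhead : w.head? = some depot) (hlast : w.getLast? = some depot)
    (hsteps : ∀ p ∈ walkSteps w, A p.1 p.2) (hvisit : ∀ r ∈ R, r ∈ w)
    (nR : V → ℕ)
    (hnR : ∀ (k : ℕ) (i : V), w[k]? = some i → nR i ≤ visitedCount R depot w k) :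
    ∀ i j : V, arcFlow R depot n w i j ≤ (n - nR i) * arcUsage w i j := by
  intro i j
  have h1 : arcFlow R depot n w i j ≤
      ∑ k ∈ Finset.range w.length,
        (n - nR i) * (if w[k]? = some i ∧ w[k + 1]? = some j then 1 else 0) := by
    apply Finset.sum_le_sum
    intro k _
    by_cases h : w[k]? = some i ∧ w[k + 1]? = some j
    · simp only [h, and_self, if_pos, mul_one, if_true]
      exact Nat.sub_le_sub_left (hnR k i h.1) n
    · simp [h]
  calc arcFlow R depot n w i j ≤ _ := h1
    _ = (n - nR i) * arcUsage w i j := by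
        rw [← Finset.mul_sum, count_steps]
        rfl
end
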